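/- Let k be a commutative ring containing ℂ, A a k-algebra, and g an endomorphism of A compatible with an endomorphism g of k (i.e. g(za) = g(z)g(a)). Let A_g denote A viewed as a right module over A ⊗ A^op via a·(a₁ ⊗ a₂) = a₂ a g(a₁), with k ⊗ k acting by (z₁ ⊗ z₂)·a = g(z₁)z₂ a. If 𝔪, 𝔫 are maximal ideals of k with g⁻¹(𝔫) ≠ 𝔪, then the localization of A_g at the maximal ideal of k ⊗ k corresponding to (𝔪, 𝔫) is zero. -/
import Mathlib


open TensorProduct

/-- The algebra homomorphism `k ⊗ k → k`, `z₁ ⊗ z₂ ↦ g(z₁)·z₂`, through which the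
`k ⊗ k`-module structure of the twisted bimodule `A_g` factors. -/
noncomputable def twistedMul (k : Type*) [CommRing k] [Algebra ℂ k] (g : k →ₐ[ℂ] k) :
    (k ⊗[ℂ] k) →ₐ[ℂ] k :=
  Algebra.TensorProduct.lift g (AlgHom.id ℂ k) (fun _ _ => Commute.all _ _)

/-- Let `k` be a commutative ring containing `ℂ`, `A` a `k`-algebra, and `g`
an endomorphism of `A` compatible with an endomorphism `g` of `k` (i.e. `g(z • a) = g z • g a`).
Let `A_g` denote `A` viewed as a module over `k ⊗ k` via `(z₁ ⊗ z₂) • a = g(z₁) z₂ a`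
(this is the `k ⊗ k`-module structure underlying the right `A ⊗ A^op`-module `A_g`).
If `𝔪`, `𝔫` are maximal ideals of `k` (with residue fields `ℂ`, given by characters
`χ_𝔪`, `χ_𝔫`) such that `g⁻¹(𝔫) ≠ 𝔪`, then the localization of `A_g` at the maximal ideal
of `k ⊗ k` corresponding to `(𝔪, 𝔫)` (namely `ker (χ_𝔪 ⊗ χ_𝔫)`) is zero. -/
theorem localization_of_twisted_bimodule_eq_zero
    (k : Type*) [CommRing k] [Algebra ℂ k]
    (A : Type*) [Ring A] [Algebra k A]
    (g : k →ₐ[ℂ] k) (gA : A →+* A)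
    (hcompat : ∀ (z : k) (a : A), gA (z • a) = g z • gA a)
    (𝔪 𝔫 : Ideal k) (hm : 𝔪.IsMaximal) (hn : 𝔫.IsMaximal)
    (χm χn : k →ₐ[ℂ] ℂ)
    (hχm : RingHom.ker (χm : k →+* ℂ) = 𝔪) (hχn : RingHom.ker (χn : k →+* ℂ) = 𝔫)
    (hne : Ideal.comap (g : k →+* k) 𝔫 ≠ 𝔪)
    (P : Ideal (k ⊗[ℂ] k))
    (hP : P = RingHom.ker
      ((Algebra.TensorProduct.lift χm χn (fun _ _ => Commute.all _ _) : (k ⊗[ℂ] k) →ₐ[ℂ] ℂ) :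
        (k ⊗[ℂ] k) →+* ℂ))
    (hPprime : P.IsPrime) :
    letI : Module (k ⊗[ℂ] k) A := Module.compHom A ((twistedMul k g) : (k ⊗[ℂ] k) →+* k)
    Subsingleton (LocalizedModule P.primeCompl A) := by
  obtain ⟨z, hz⟩ : ∃ z : k, χm z ≠ χn (g z) := by
    by_contra h
    push_neg at h
    apply hne
    ext z
    simp [← hχn, ← hχm, RingHom.mem_ker, ← h z]
  letI : Module (k ⊗[ℂ] k) A := Module.compHom A ((twistedMul k g) : (k ⊗[ℂ] k) →+* k)
  subst hP
  set s : k ⊗[ℂ] k := z ⊗ₜ[ℂ] 1 - 1 ⊗ₜ[ℂ] (g z) with hs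
  have hsP : s ∈ (RingHom.ker
      ((Algebra.TensorProduct.lift χm χn (fun _ _ => Commute.all _ _) : (k ⊗[ℂ] k) →ₐ[ℂ] ℂ) :
        (k ⊗[ℂ] k) →+* ℂ)).primeCompl := by
    intro hmem
    rw [SetLike.mem_coe, RingHom.mem_ker, map_sub] at hmem
    simp [Algebra.TensorProduct.lift_tmul, sub_eq_zero] at hmem
    exact hz hmem
  have hsmul : ∀ a : A, s • a = 0 := by
    intro a
    show (twistedMul k g s) • a = 0
    have : twistedMul k g s = 0 := by
      simp [hs, twistedMul, map_sub, Algebra.TensorProduct.lift_tmul]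
    rw [this, zero_smul]
  constructor
  intro x y
  induction x using LocalizedModule.induction_on with
  | h m t =>
  induction y using LocalizedModule.induction_on with
  | h m' t' =>
  rw [LocalizedModule.mk_eq]
  exact ⟨⟨s, hsP⟩, by simp [hsmul]⟩
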